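/- For every formula A in negation normal form, the implication CNFtoPropF (MakeCNF A) → NNFtoPropF A is provable in classical natural deduction from the empty context. -/

import Mathlib

inductive PropF (V : Type) : Type
  | Var : V → PropF V
  | Bot : PropF V
  | Conj : PropF V → PropF V → PropF V
  | Disj : PropF V → PropF V → PropF V
  | Impl : PropF V → PropF V → PropF V
deriving DecidableEq

variable {V : Type} [DecidableEq V]

def PropF.Neg (A : PropF V) : PropF V := A.Impl .Bot
def PropF.Top : PropF V := PropF.Neg .Bot

def TrueQ (v : V → Bool) : PropF V → Bool
  | .Var p => v p
  | .Bot => false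
  | .Conj B C => TrueQ v B && TrueQ v C
  | .Disj B C => TrueQ v B || TrueQ v C
  | .Impl B C => !(TrueQ v B) || TrueQ v C

def Satisfies (v : V → Bool) (Γ : List (PropF V)) : Prop := ∀ A ∈ Γ, TrueQ v A = true
def Models (Γ : List (PropF V)) (A : PropF V) : Prop := ∀ v, Satisfies v Γ → TrueQ v A = true
def Valid (A : PropF V) : Prop := Models [] A
def Validates (v : V → Bool) (Δ : List (PropF V)) : Prop := ∃ A ∈ Δ, TrueQ v A = true

inductive Nc : List (PropF V) → PropF V → Prop
  | Nax (Γ : List (PropF V)) (A : PropF V) : A ∈ Γ → Nc Γ A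
  | ImpI (Γ : List (PropF V)) (A B : PropF V) : Nc (A :: Γ) B → Nc Γ (A.Impl B)
  | ImpE (Γ : List (PropF V)) (A B : PropF V) : Nc Γ (A.Impl B) → Nc Γ A → Nc Γ B
  | BotC (Γ : List (PropF V)) (A : PropF V) : Nc (A.Neg :: Γ) .Bot → Nc Γ A
  | AndI (Γ : List (PropF V)) (A B : PropF V) : Nc Γ A → Nc Γ B → Nc Γ (A.Conj B)
  | AndE1 (Γ : List (PropF V)) (A B : PropF V) : Nc Γ (A.Conj B) → Nc Γ A
  | AndE2 (Γ : List (PropF V)) (A B : PropF V) : Nc Γ (A.Conj B) → Nc Γ B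
  | OrI1 (Γ : List (PropF V)) (A B : PropF V) : Nc Γ A → Nc Γ (A.Disj B)
  | OrI2 (Γ : List (PropF V)) (A B : PropF V) : Nc Γ B → Nc Γ (A.Disj B)
  | OrE (Γ : List (PropF V)) (A B C : PropF V) : Nc Γ (A.Disj B) → Nc (A :: Γ) C → Nc (B :: Γ) C → Nc Γ C

def Provable (A : PropF V) : Prop := Nc [] A

inductive NNF (V : Type) : Type
  | NPos : V → NNF V
  | NNeg : V → NNF V
  | NBot : NNF V
  | NTop : NNF V
  | NConj : NNF V → NNF V → NNF V
  | NDisj : NNF V → NNF V → NNF V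
deriving DecidableEq

def NNFtoPropF : NNF V → PropF V
  | .NPos p => .Var p
  | .NNeg p => (PropF.Var p).Neg
  | .NBot => .Bot
  | .NTop => PropF.Top
  | .NConj B C => (NNFtoPropF B).Conj (NNFtoPropF C)
  | .NDisj B C => (NNFtoPropF B).Disj (NNFtoPropF C)

mutual
def MakeNNF : PropF V → NNF V
  | .Var p => .NPos p
  | .Bot => .NBot
  | .Disj B C => .NDisj (MakeNNF B) (MakeNNF C)
  | .Conj B C => .NConj (MakeNNF B) (MakeNNF C)
  | .Impl B C => .NDisj (MakeNNFN B) (MakeNNF C)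
def MakeNNFN : PropF V → NNF V
  | .Var p => .NNeg p
  | .Bot => .NTop
  | .Disj B C => .NConj (MakeNNFN B) (MakeNNFN C)
  | .Conj B C => .NDisj (MakeNNFN B) (MakeNNFN C)
  | .Impl B C => .NConj (MakeNNF B) (MakeNNFN C)
end

inductive Lit (V : Type) : Type
  | LPos : V → Lit V
  | LNeg : V → Lit V
  | LBot : Lit V
  | LTop : Lit V
deriving DecidableEq

def LiteraltoPropF : Lit V → PropF V
  | .LPos p => .Var p
  | .LNeg p => (PropF.Var p).Neg
  | .LBot => .Bot
  | .LTop => PropF.Top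

abbrev Clause (V : Type) : Type := List (Lit V)
abbrev CNF (V : Type) : Type := List (Clause V)

abbrev ClausetoPropF (l : Clause V) : PropF V :=
  l.foldr (fun a r => (LiteraltoPropF a).Disj r) .Bot

def CNFtoPropF (ll : CNF V) : PropF V :=
  ll.foldr (fun c r => (ClausetoPropF c).Conj r) PropF.Top

def AddClause (l : Clause V) (ll : CNF V) : CNF V := ll.map (fun l2 => l ++ l2)
def Disjunct (ll ll2 : CNF V) : CNF V := ll.flatMap (fun l => AddClause l ll2)

def MakeCNF : NNF V → CNF V
  | .NPos p => [[.LPos p]]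
  | .NNeg p => [[.LNeg p]]
  | .NBot => [[.LBot]]
  | .NTop => [[.LTop]]
  | .NConj B C => MakeCNF B ++ MakeCNF C
  | .NDisj B C => Disjunct (MakeCNF B) (MakeCNF C)

def Valid_Clause (l : Clause V) : Prop :=
  Lit.LTop ∈ l ∨ ∃ p, Lit.LPos p ∈ l ∧ Lit.LNeg p ∈ l
def Valid_CNF (ll : CNF V) : Prop := ∀ l ∈ ll, Valid_Clause l

inductive AxiomH : PropF V → Prop
  | HOrI1 (A B : PropF V) : AxiomH (A.Impl (A.Disj B))
  | HOrI2 (A B : PropF V) : AxiomH (B.Impl (A.Disj B))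
  | HAndI (A B : PropF V) : AxiomH (A.Impl (B.Impl (A.Conj B)))
  | HOrE (A B C : PropF V) : AxiomH ((A.Disj B).Impl ((A.Impl C).Impl ((B.Impl C).Impl C)))
  | HAndE1 (A B : PropF V) : AxiomH ((A.Conj B).Impl A)
  | HAndE2 (A B : PropF V) : AxiomH ((A.Conj B).Impl B)
  | HS (A B C : PropF V) : AxiomH ((A.Impl (B.Impl C)).Impl ((A.Impl B).Impl (A.Impl C)))
  | HK (A B : PropF V) : AxiomH (A.Impl (B.Impl A))
  | HClas (A : PropF V) : AxiomH ((A.Neg.Neg).Impl A)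

inductive Hc : List (PropF V) → PropF V → Prop
  | Hass (A : PropF V) (Γ : List (PropF V)) : A ∈ Γ → Hc Γ A
  | Hax (A : PropF V) (Γ : List (PropF V)) : AxiomH A → Hc Γ A
  | HImpE (Γ : List (PropF V)) (A B : PropF V) : Hc Γ (A.Impl B) → Hc Γ A → Hc Γ B

inductive G : List (PropF V) → List (PropF V) → Prop
  | Gax (A : PropF V) (Γ Δ : List (PropF V)) : A ∈ Γ → A ∈ Δ → G Γ Δ
  | GBot (Γ Δ : List (PropF V)) : PropF.Bot ∈ Γ → G Γ Δ
  | AndL (A B : PropF V) (Γ1 Γ2 Δ : List (PropF V)) : G (Γ1 ++ A :: B :: Γ2) Δ → G (Γ1 ++ (A.Conj B) :: Γ2) Δ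
  | AndR (A B : PropF V) (Γ Δ1 Δ2 : List (PropF V)) : G Γ (Δ1 ++ A :: Δ2) → G Γ (Δ1 ++ B :: Δ2) → G Γ (Δ1 ++ (A.Conj B) :: Δ2)
  | OrL (A B : PropF V) (Γ1 Γ2 Δ : List (PropF V)) : G (Γ1 ++ A :: Γ2) Δ → G (Γ1 ++ B :: Γ2) Δ → G (Γ1 ++ (A.Disj B) :: Γ2) Δ
  | OrR (A B : PropF V) (Γ Δ1 Δ2 : List (PropF V)) : G Γ (Δ1 ++ A :: B :: Δ2) → G Γ (Δ1 ++ (A.Disj B) :: Δ2)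
  | ImpL (A B : PropF V) (Γ1 Γ2 Δ : List (PropF V)) : G (Γ1 ++ B :: Γ2) Δ → G (Γ1 ++ Γ2) (A :: Δ) → G (Γ1 ++ (A.Impl B) :: Γ2) Δ
  | ImpR (A B : PropF V) (Γ Δ1 Δ2 : List (PropF V)) : G (A :: Γ) (Δ1 ++ B :: Δ2) → G Γ (Δ1 ++ (A.Impl B) :: Δ2)
  | Cut (A : PropF V) (Γ Δ : List (PropF V)) : G Γ (A :: Δ) → G (A :: Γ) Δ → G Γ Δ

inductive Gcf : List (PropF V) → List (PropF V) → Prop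
  | Gax (p : V) (Γ Δ : List (PropF V)) : PropF.Var p ∈ Γ → PropF.Var p ∈ Δ → Gcf Γ Δ
  | GBot (Γ Δ : List (PropF V)) : PropF.Bot ∈ Γ → Gcf Γ Δ
  | AndL (A B : PropF V) (Γ1 Γ2 Δ : List (PropF V)) : Gcf (Γ1 ++ A :: B :: Γ2) Δ → Gcf (Γ1 ++ (A.Conj B) :: Γ2) Δ
  | AndR (A B : PropF V) (Γ Δ1 Δ2 : List (PropF V)) : Gcf Γ (Δ1 ++ A :: Δ2) → Gcf Γ (Δ1 ++ B :: Δ2) → Gcf Γ (Δ1 ++ (A.Conj B) :: Δ2)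
  | OrL (A B : PropF V) (Γ1 Γ2 Δ : List (PropF V)) : Gcf (Γ1 ++ A :: Γ2) Δ → Gcf (Γ1 ++ B :: Γ2) Δ → Gcf (Γ1 ++ (A.Disj B) :: Γ2) Δ
  | OrR (A B : PropF V) (Γ Δ1 Δ2 : List (PropF V)) : Gcf Γ (Δ1 ++ A :: B :: Δ2) → Gcf Γ (Δ1 ++ (A.Disj B) :: Δ2)
  | ImpL (A B : PropF V) (Γ1 Γ2 Δ : List (PropF V)) : Gcf (Γ1 ++ B :: Γ2) Δ → Gcf (Γ1 ++ Γ2) (A :: Δ) → Gcf (Γ1 ++ (A.Impl B) :: Γ2) Δ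
  | ImpR (A B : PropF V) (Γ Δ1 Δ2 : List (PropF V)) : Gcf (A :: Γ) (Δ1 ++ B :: Δ2) → Gcf Γ (Δ1 ++ (A.Impl B) :: Δ2)

def BigOr (Δ : List (PropF V)) : PropF V := Δ.foldr PropF.Disj .Bot

def size : PropF V → Nat
  | .Var _ => 0
  | .Bot => 0
  | .Conj B C => (size B + size C).succ
  | .Disj B C => (size B + size C).succ
  | .Impl B C => (size B + size C).succ

def sizel (Γ : List (PropF V)) : Nat := (Γ.map size).sum
def sizes (Γ Δ : List (PropF V)) : Nat := sizel Γ + sizel Δ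

/-! Each step of `MakeCNF` is undone by an admissible rule of `Nc`, stated for an arbitrary
context. The only non-trivial one is the distribution step behind `Disjunct`, which reduces
to deriving `A ∨ (B ∧ C)` from `A ∨ B` and `A ∨ C`. -/

namespace Nc

omit [DecidableEq V]

variable {Γ Δ : List (PropF V)} {A B C A' B' : PropF V}

theorem weaken (h : Nc Γ A) (hΓ : Γ ⊆ Δ) : Nc Δ A := by
  induction h generalizing Δ with
  | Nax _ _ hA => exact Nax _ _ (hΓ hA)
  | ImpI _ _ _ _ ih => exact ImpI _ _ _ (ih (List.cons_subset_cons _ hΓ))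
  | ImpE _ _ _ _ _ ih₁ ih₂ => exact ImpE _ _ _ (ih₁ hΓ) (ih₂ hΓ)
  | BotC _ _ _ ih => exact BotC _ _ (ih (List.cons_subset_cons _ hΓ))
  | AndI _ _ _ _ _ ih₁ ih₂ => exact AndI _ _ _ (ih₁ hΓ) (ih₂ hΓ)
  | AndE1 _ _ _ _ ih => exact AndE1 _ _ _ (ih hΓ)
  | AndE2 _ _ _ _ ih => exact AndE2 _ _ _ (ih hΓ)
  | OrI1 _ _ _ _ ih => exact OrI1 _ _ _ (ih hΓ)
  | OrI2 _ _ _ _ ih => exact OrI2 _ _ _ (ih hΓ)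
  | OrE _ _ _ _ _ _ _ ih ih₁ ih₂ =>
      exact OrE _ _ _ _ (ih hΓ) (ih₁ (List.cons_subset_cons _ hΓ)) (ih₂ (List.cons_subset_cons _ hΓ))

theorem weaken_cons (h : Nc Γ A) : Nc (B :: Γ) A :=
  h.weaken (List.subset_cons_self _ _)

theorem head : Nc (A :: Γ) A :=
  Nax _ _ List.mem_cons_self

theorem exfalso (h : Nc Γ .Bot) : Nc Γ A :=
  BotC _ _ h.weaken_cons

theorem top : Nc Γ PropF.Top :=
  ImpI _ _ _ head

theorem disj_map (h : Nc Γ (A.Disj B)) (hA : Nc (A :: Γ) A') (hB : Nc (B :: Γ) B') :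
    Nc Γ (A'.Disj B') :=
  OrE _ _ _ _ h (OrI1 _ _ _ hA) (OrI2 _ _ _ hB)

theorem disj_comm (h : Nc Γ (A.Disj B)) : Nc Γ (B.Disj A) :=
  OrE _ _ _ _ h (OrI2 _ _ _ head) (OrI1 _ _ _ head)

theorem disj_conj_of_disj_of_disj (hB : Nc Γ (A.Disj B)) (hC : Nc Γ (A.Disj C)) :
    Nc Γ (A.Disj (B.Conj C)) :=
  OrE _ _ _ _ hB (OrI1 _ _ _ head) <|
    OrE _ _ _ _ hC.weaken_cons (OrI1 _ _ _ head)
      (OrI2 _ _ _ (AndI _ _ _ (Nax _ _ (by simp)) head))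

theorem literal_of_cnf_singleton {l : Lit V} (h : Nc Γ (CNFtoPropF [[l]])) :
    Nc Γ (LiteraltoPropF l) :=
  OrE _ _ _ _ (AndE1 _ _ _ h) head (exfalso head)

theorem cnf_left_of_cnf_append {ll₁ ll₂ : CNF V} (h : Nc Γ (CNFtoPropF (ll₁ ++ ll₂))) :
    Nc Γ (CNFtoPropF ll₁) := by
  induction ll₁ with
  | nil => exact top
  | cons c ll₁ ih => exact AndI _ _ _ (AndE1 _ _ _ h) (ih (AndE2 _ _ _ h))

theorem cnf_right_of_cnf_append {ll₁ ll₂ : CNF V} (h : Nc Γ (CNFtoPropF (ll₁ ++ ll₂))) :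
    Nc Γ (CNFtoPropF ll₂) := by
  induction ll₁ with
  | nil => exact h
  | cons c ll₁ ih => exact ih (AndE2 _ _ _ h)

theorem clause_disj_of_clause_append {l₁ l₂ : Clause V}
    (h : Nc Γ (ClausetoPropF (l₁ ++ l₂))) :
    Nc Γ ((ClausetoPropF l₁).Disj (ClausetoPropF l₂)) := by
  induction l₁ generalizing Γ with
  | nil => exact OrI2 _ _ _ h
  | cons a l₁ ih =>
      exact OrE _ _ _ _ h (OrI1 _ _ _ (OrI1 _ _ _ head))
        (disj_map (ih head) (OrI2 _ _ _ head) head)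

theorem clause_disj_cnf_of_addClause {c : Clause V} {ll : CNF V}
    (h : Nc Γ (CNFtoPropF (AddClause c ll))) :
    Nc Γ ((ClausetoPropF c).Disj (CNFtoPropF ll)) := by
  induction ll with
  | nil => exact OrI2 _ _ _ top
  | cons d ll ih =>
      exact disj_conj_of_disj_of_disj (clause_disj_of_clause_append (AndE1 _ _ _ h))
        (ih (AndE2 _ _ _ h))

theorem cnf_disj_of_disjunct {ll₁ ll₂ : CNF V} (h : Nc Γ (CNFtoPropF (Disjunct ll₁ ll₂))) :
    Nc Γ ((CNFtoPropF ll₁).Disj (CNFtoPropF ll₂)) := by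
  induction ll₁ with
  | nil => exact OrI1 _ _ _ top
  | cons c ll₁ ih =>
      have hsplit : Disjunct (c :: ll₁) ll₂ = AddClause c ll₂ ++ Disjunct ll₁ ll₂ := rfl
      rw [hsplit] at h
      have hc := clause_disj_cnf_of_addClause (cnf_left_of_cnf_append h)
      have hrest := ih (cnf_right_of_cnf_append h)
      exact disj_comm (disj_conj_of_disj_of_disj (disj_comm hc) (disj_comm hrest))

theorem nnf_of_cnf_makeCNF (A : NNF V) (h : Nc Γ (CNFtoPropF (MakeCNF A))) :
    Nc Γ (NNFtoPropF A) := by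
  induction A generalizing Γ with
  | NPos | NNeg | NBot | NTop => exact literal_of_cnf_singleton h
  | NConj B C ihB ihC =>
      exact AndI _ _ _ (ihB (cnf_left_of_cnf_append h)) (ihC (cnf_right_of_cnf_append h))
  | NDisj B C ihB ihC => exact disj_map (cnf_disj_of_disjunct h) (ihB head) (ihC head)

end Nc

theorem stmt7 {V : Type} [DecidableEq V] (A : NNF V) :
    Provable ((CNFtoPropF (MakeCNF A)).Impl (NNFtoPropF A)) :=
  Nc.ImpI _ _ _ (Nc.nnf_of_cnf_makeCNF A Nc.head)
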